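/- Let h : (F̄*, m, e) → (F̄_τ, m', e') be the unique monad morphism in Kl(T) with h ∘ ν = ι¹, and for α : X ⊸ F̄_τ X let α̲ = [ν_X, e_X] · α. Then h_X · α̲ = α. Moreover, if for all φ : F̄*X ⊸ F̄*X and ψ : F̄_τX ⊸ F̄_τX, ψ · h_X = h_X · φ implies ψ* · h_X = h_X · φ*, then h_X · α̲^⊛ = α^★, where α^★ = (m'_X · F̄_τ α)* · e'_X and α̲^⊛ = (m_X · F̄* α̲)* · e_X. -/

import Mathlib

open CategoryTheory CategoryTheory.Limits

variable {C : Type*} [Category C] (T : Monad C)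
  [∀ X Y : Kleisli T, PartialOrder (X ⟶ Y)]
  [HasBinaryCoproducts (Kleisli T)] [HasZeroMorphisms (Kleisli T)]

/-- The functor `F̄_τ = F̄ + Id` on `Kl(T)`. -/
@[simps]
noncomputable def Ftau (F' : Kleisli T ⥤ Kleisli T) : Kleisli T ⥤ Kleisli T where
  obj X := F'.obj X ⨿ X
  map f := coprod.map (F'.map f) f

/-- The unit `e'_X = ι²` of the monad `F̄_τ`. -/
noncomputable def FtauUnit (F' : Kleisli T ⥤ Kleisli T) (X : Kleisli T) :
    X ⟶ (Ftau T F').obj X :=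
  coprod.inr

/-- The multiplication `m'_X = [ι¹, id] ∘ (F̄([0,id]) + id)` of the monad `F̄_τ`. -/
noncomputable def FtauMul (F' : Kleisli T ⥤ Kleisli T) (X : Kleisli T) :
    (Ftau T F').obj ((Ftau T F').obj X) ⟶ (Ftau T F').obj X :=
  coprod.map (F'.map (coprod.desc 0 (𝟙 X))) (𝟙 ((Ftau T F').obj X)) ≫
    coprod.desc coprod.inl (𝟙 ((Ftau T F').obj X))

variable (M : Monad (Kleisli T)) (F' : Kleisli T ⥤ Kleisli T)

/-- The natural transformation `[ν, e] : F̄_τ ⟹ F̄*` (componentwise cotupling of the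
universal map `ν : F̄ ⟹ F̄*` and the unit `e` of the free monad `M = F̄*`). -/
noncomputable def nuE (nu : F' ⟶ M.toFunctor) (X : Kleisli T) :
    (Ftau T F').obj X ⟶ M.obj X :=
  coprod.desc (nu.app X) (M.η.app X)

/-- The translation `α̲ = [ν,e] · α` of an `F̄_τ`-coalgebra into an `F̄*`-coalgebra. -/
noncomputable def underline (nu : F' ⟶ M.toFunctor) {X : Kleisli T}
    (α : X ⟶ (Ftau T F').obj X) : X ⟶ M.obj X :=
  α ≫ nuE T M F' nu X

/-- The saturation `α^★ = (m'_X · F̄_τ α)* · e'_X` of an `F̄_τ`-coalgebra. -/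
noncomputable def bigstarTau (star : ∀ {Y : Kleisli T}, (Y ⟶ Y) → (Y ⟶ Y))
    {X : Kleisli T} (α : X ⟶ (Ftau T F').obj X) : X ⟶ (Ftau T F').obj X :=
  FtauUnit T F' X ≫ star ((Ftau T F').map α ≫ FtauMul T F' X)

/-- The saturation `β^⊛ = (m_X · F̄* β)* · e_X` of an `F̄*`-coalgebra. -/
noncomputable def bigstarM (star : ∀ {Y : Kleisli T}, (Y ⟶ Y) → (Y ⟶ Y))
    {X : Kleisli T} (β : X ⟶ M.obj X) : X ⟶ M.obj X :=
  M.η.app X ≫ star (M.map β ≫ M.μ.app X)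

/-!
Since `h ∘ ν = ι¹` and `h ∘ e = ι²`, `h` is a retraction of `[ν, e]`, so `h_X · α̲ = α`.
Being a monad morphism, `h` then intertwines the Kleisli extensions `m_X · F̄* α̲` and
`m'_X · F̄_τ α`; the transfer hypothesis moves the saturator across `h`, and `h ∘ e = e'`
finishes the computation.
-/

section

variable {𝒟 : Type*} [Category 𝒟]

theorem coprod_desc_comp_eq_id [HasBinaryCoproducts 𝒟] {A B Z : 𝒟} {f : A ⟶ Z} {g : B ⟶ Z}
    {r : Z ⟶ A ⨿ B} (hf : f ≫ r = coprod.inl) (hg : g ≫ r = coprod.inr) :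
    coprod.desc f g ≫ r = 𝟙 (A ⨿ B) := by
  rw [coprod.desc_comp, hf, hg, coprod.desc_inl_inr]

theorem app_comp_map_comp_mul_of_comp_app_eq {S : Monad 𝒟} {N : 𝒟 ⥤ 𝒟}
    (mul : ∀ X, N.obj (N.obj X) ⟶ N.obj X) (θ : S.toFunctor ⟶ N)
    (hμ : ∀ X, S.μ.app X ≫ θ.app X = (θ.app (S.obj X) ≫ N.map (θ.app X)) ≫ mul X)
    {X : 𝒟} {β : X ⟶ S.obj X} {α : X ⟶ N.obj X} (hβ : β ≫ θ.app X = α) :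
    θ.app X ≫ N.map α ≫ mul X = (S.map β ≫ S.μ.app X) ≫ θ.app X := by
  rw [Category.assoc, hμ, ← Category.assoc (S.map β), ← Category.assoc (S.map β),
    θ.naturality β, ← hβ]
  simp only [Functor.map_comp, Category.assoc]

end

/-!
STATEMENT 13: Let `h : (F̄*, m, e) → (F̄_τ, m', e')` be the unique monad morphism in
`Kl(T)` with `h ∘ ν = ι¹`, and for `α : X ⊸ F̄_τ X` let `α̲ = [ν, e] · α`.  Then
`h_X · α̲ = α`.  Moreover, if for all `φ : F̄*X ⊸ F̄*X` and `ψ : F̄_τX ⊸ F̄_τX`,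
`ψ · h_X = h_X · φ` implies `ψ* · h_X = h_X · φ*`, then `h_X · α̲^⊛ = α^★`, where
`α^★ = (m'_X · F̄_τ α)* · e'_X` and `α̲^⊛ = (m_X · F̄* α̲)* · e_X`.
Here `T` is an order saturation monad whose Kleisli category has zero morphisms, `F̄` is
a lifting of `F`, `M = F̄*` is the free monad over `F̄` with universal map `ν`, and both
`F̄_τ` and `F̄*` satisfy the hypotheses making `TF_τ` and `TF*` order saturation monads.
-/

theorem monad_morphism_intertwines_saturators
    -- `T` is an order saturation monad with saturator `star`
    (star : ∀ {X : Kleisli T}, (X ⟶ X) → (X ⟶ X))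
    -- the universal map `ν` and the unique monad morphism `h` with `h ∘ ν = ι¹`
    (nu : F' ⟶ M.toFunctor)
    (h : M.toFunctor ⟶ Ftau T F')
    (hν : ∀ X : Kleisli T, nu.app X ≫ h.app X = (coprod.inl : F'.obj X ⟶ (Ftau T F').obj X))
    (hη : ∀ X : Kleisli T, M.η.app X ≫ h.app X = FtauUnit T F' X)
    (hμ : ∀ X : Kleisli T, M.μ.app X ≫ h.app X =
      (h.app (M.obj X) ≫ (Ftau T F').map (h.app X)) ≫ FtauMul T F' X) :
    -- then `h_X · α̲ = α` …
    (∀ {X : Kleisli T} (α : X ⟶ (Ftau T F').obj X),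
      underline T M F' nu α ≫ h.app X = α) ∧
    -- … and under the star-transfer assumption, `h_X · α̲^⊛ = α^★`
    ((∀ {X : Kleisli T} (φ : M.obj X ⟶ M.obj X)
        (ψ : (Ftau T F').obj X ⟶ (Ftau T F').obj X),
        h.app X ≫ ψ = φ ≫ h.app X → h.app X ≫ star ψ = star φ ≫ h.app X) →
      ∀ {X : Kleisli T} (α : X ⟶ (Ftau T F').obj X),
        bigstarM T M @star (underline T M F' nu α) ≫ h.app X =
          bigstarTau T F' @star α) := by
  have hretract : ∀ X, nuE T M F' nu X ≫ h.app X = 𝟙 _ := fun X =>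
    coprod_desc_comp_eq_id (hν X) (hη X)
  have hunderline : ∀ {X : Kleisli T} (α : X ⟶ (Ftau T F').obj X),
      underline T M F' nu α ≫ h.app X = α := fun α => by
    rw [underline, Category.assoc, hretract, Category.comp_id]
  refine ⟨hunderline, fun htrans X α => ?_⟩
  have hstar := htrans _ _
    (app_comp_map_comp_mul_of_comp_app_eq (FtauMul T F') h hμ (hunderline α))
  rw [bigstarM, bigstarTau, Category.assoc, ← hstar, ← Category.assoc, hη]
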